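/- arXiv:1706.08747 — 3 statements merged into one kernel-verified Lean document; each statement's English description precedes it below -/
import Mathlib

section
/- In the q-Onsager algebra B_c, with B_δ = −B_0B_1 + q^{-2}B_1B_0, one has [B_δ, B_0] = c[2]_q (B_{δ+α_0} − B_1), where B_{δ+α_0} := T_0(B_1). -/
set_option synthInstance.maxHeartbeats 1000000
set_option maxHeartbeats 1000000

noncomputable section

open scoped BigOperators

/-- The field `ℚ(q)` of rational functions. -/
abbrev KK : Type := RatFunc ℚ

/-- The indeterminate `q ∈ ℚ(q)`. -/
def qq : KK := RatFunc.X

/-- The `q`-Dolan–Grady relations defining the `q`-Onsager algebra `B_c`: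
`Σᵢ (−1)ⁱ [3 choose i]_q B₀^{3−i} B₁ B₀^i = −qc(q+q⁻¹)²(B₀B₁ − B₁B₀)` and the
same with `B₀, B₁` interchanged (here `[3 choose 1]_q = [3 choose 2]_q = q² + 1 + q⁻²`). -/
inductive qOnsRel (c : KK) : FreeAlgebra KK (Fin 2) → FreeAlgebra KK (Fin 2) → Prop
  | r0 : qOnsRel c
      (FreeAlgebra.ι KK (0 : Fin 2) ^ 3 * FreeAlgebra.ι KK (1 : Fin 2)
        - (qq ^ 2 + 1 + (qq⁻¹) ^ 2) • (FreeAlgebra.ι KK (0 : Fin 2) ^ 2 * FreeAlgebra.ι KK (1 : Fin 2) * FreeAlgebra.ι KK (0 : Fin 2))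
        + (qq ^ 2 + 1 + (qq⁻¹) ^ 2) • (FreeAlgebra.ι KK (0 : Fin 2) * FreeAlgebra.ι KK (1 : Fin 2) * FreeAlgebra.ι KK (0 : Fin 2) ^ 2)
        - FreeAlgebra.ι KK (1 : Fin 2) * FreeAlgebra.ι KK (0 : Fin 2) ^ 3)
      ((-(qq * c * (qq + qq⁻¹) ^ 2)) •
        (FreeAlgebra.ι KK (0 : Fin 2) * FreeAlgebra.ι KK (1 : Fin 2) - FreeAlgebra.ι KK (1 : Fin 2) * FreeAlgebra.ι KK (0 : Fin 2)))
  | r1 : qOnsRel c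
      (FreeAlgebra.ι KK (1 : Fin 2) ^ 3 * FreeAlgebra.ι KK (0 : Fin 2)
        - (qq ^ 2 + 1 + (qq⁻¹) ^ 2) • (FreeAlgebra.ι KK (1 : Fin 2) ^ 2 * FreeAlgebra.ι KK (0 : Fin 2) * FreeAlgebra.ι KK (1 : Fin 2))
        + (qq ^ 2 + 1 + (qq⁻¹) ^ 2) • (FreeAlgebra.ι KK (1 : Fin 2) * FreeAlgebra.ι KK (0 : Fin 2) * FreeAlgebra.ι KK (1 : Fin 2) ^ 2)
        - FreeAlgebra.ι KK (0 : Fin 2) * FreeAlgebra.ι KK (1 : Fin 2) ^ 3)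
      ((-(qq * c * (qq + qq⁻¹) ^ 2)) •
        (FreeAlgebra.ι KK (1 : Fin 2) * FreeAlgebra.ι KK (0 : Fin 2) - FreeAlgebra.ι KK (0 : Fin 2) * FreeAlgebra.ι KK (1 : Fin 2)))

/-- The `q`-Onsager algebra `B_c`. -/
abbrev QOns (c : KK) : Type := RingQuot (qOnsRel c)

/-- The generator `B₀` of `B_c`. -/
def Bo (c : KK) : QOns c := RingQuot.mkAlgHom KK (qOnsRel c) (FreeAlgebra.ι KK (0 : Fin 2))

/-- The generator `B₁` of `B_c`. -/
def Bi (c : KK) : QOns c := RingQuot.mkAlgHom KK (qOnsRel c) (FreeAlgebra.ι KK (1 : Fin 2))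

/-- `B_δ = −B₀B₁ + q⁻²B₁B₀`. -/
def Bdel (c : KK) : QOns c := -(Bo c * Bi c) + ((qq⁻¹) ^ 2) • (Bi c * Bo c)

/-- `B̃_δ = −B₁B₀ + q⁻²B₀B₁`. -/
def tBdel (c : KK) : QOns c := -(Bi c * Bo c) + ((qq⁻¹) ^ 2) • (Bo c * Bi c)

/-- The formula for `T₀(B₁)`:
`(1/(q²[2]_q c))(B₁B₀² − q[2]_q B₀B₁B₀ + q²B₀²B₁) + B₁`. -/
def T0B1val (c : KK) : QOns c :=
  (qq ^ 2 * (qq + qq⁻¹) * c)⁻¹ •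
    (Bi c * Bo c ^ 2 - (qq * (qq + qq⁻¹)) • (Bo c * Bi c * Bo c) + qq ^ 2 • (Bo c ^ 2 * Bi c))
    + Bi c

/-- The formula for `T₀⁻¹(B₁)`:
`(1/(q²[2]_q c))(B₀²B₁ − q[2]_q B₀B₁B₀ + q²B₁B₀²) + B₁`. -/
def T0invB1val (c : KK) : QOns c :=
  (qq ^ 2 * (qq + qq⁻¹) * c)⁻¹ •
    (Bo c ^ 2 * Bi c - (qq * (qq + qq⁻¹)) • (Bo c * Bi c * Bo c) + qq ^ 2 • (Bi c * Bo c ^ 2))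
    + Bi c

/-- `T₁ = Φ ∘ T₀ ∘ Φ`. -/
def T1def (c : KK) (Φ T0 : QOns c ≃ₐ[KK] QOns c) : QOns c ≃ₐ[KK] QOns c :=
  Φ.trans (T0.trans Φ)

/-- The real root vectors `B_{nδ+α₀} = (T₀Φ)ⁿ(B₀)` for `n ≥ 0`. -/
def Ba0 (c : KK) (Φ T0 : QOns c ≃ₐ[KK] QOns c) (n : ℕ) : QOns c :=
  ((⇑T0 ∘ ⇑Φ)^[n]) (Bo c)

/-- The real root vectors `B_{nδ+α₁} = (T₁⁻¹Φ)ⁿ(B₁)` for `n ≥ 0`. -/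
def Ba1 (c : KK) (Φ T0 : QOns c ≃ₐ[KK] QOns c) (n : ℕ) : QOns c :=
  ((⇑(T1def c Φ T0).symm ∘ ⇑Φ)^[n]) (Bi c)

/-- `B_{kδ+α₁}` for `k ∈ ℤ`, with the convention `B_{kδ+α₁} = B_{(−k−1)δ+α₀}` for `k < 0`. -/
def Ba1Z (c : KK) (Φ T0 : QOns c ≃ₐ[KK] QOns c) (k : ℤ) : QOns c :=
  if 0 ≤ k then Ba1 c Φ T0 k.toNat else Ba0 c Φ T0 (-k - 1).toNat

/-- `B_{kδ+α₀}` for `k ∈ ℤ`, with the convention `B_{kδ+α₀} = B_{(−k−1)δ+α₁}` for `k < 0`. -/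
def Ba0Z (c : KK) (Φ T0 : QOns c ≃ₐ[KK] QOns c) (k : ℤ) : QOns c :=
  if 0 ≤ k then Ba0 c Φ T0 k.toNat else Ba1 c Φ T0 (-k - 1).toNat

/-- `C_m = Σ_{p=0}^{m−2} B_{pδ+α₁} B_{(m−p−2)δ+α₁}` (so `C₀ = C₁ = 0`). -/
def CC (c : KK) (Φ T0 : QOns c ≃ₐ[KK] QOns c) (m : ℕ) : QOns c :=
  ∑ p ∈ Finset.range (m - 1), Ba1 c Φ T0 p * Ba1 c Φ T0 (m - 2 - p)

/-- The imaginary root vectors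
`B_{mδ} = −B₀B_{(m−1)δ+α₁} + q⁻²B_{(m−1)δ+α₁}B₀ + (q⁻²−1)C_m` for `m ≥ 1`. -/
def Bim (c : KK) (Φ T0 : QOns c ≃ₐ[KK] QOns c) (m : ℕ) : QOns c :=
  -(Bo c * Ba1 c Φ T0 (m - 1)) + ((qq⁻¹) ^ 2) • (Ba1 c Φ T0 (m - 1) * Bo c)
    + (((qq⁻¹) ^ 2 - 1)) • CC c Φ T0 m



lemma qq_ne_zero : qq ≠ 0 := RatFunc.X_ne_zero

lemma qq_add_inv_ne_zero : qq + qq⁻¹ ≠ 0 := by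
  intro h
  have h2 : qq * (qq + qq⁻¹) = 0 := by rw [h, mul_zero]
  rw [mul_add, mul_inv_cancel₀ qq_ne_zero] at h2
  have h3 : (algebraMap (Polynomial ℚ) KK) (Polynomial.X ^ 2 + Polynomial.C 1) = 0 := by
    rw [Polynomial.C_1, map_add, map_pow, RatFunc.algebraMap_X, map_one, sq]; unfold qq at h2
    exact h2
  have h4 : (Polynomial.X ^ 2 + Polynomial.C (1:ℚ)) ≠ 0 :=
    Polynomial.X_pow_add_C_ne_zero (by norm_num) 1
  exact h4 ((map_eq_zero_iff _ (IsFractionRing.injective (Polynomial ℚ) KK)).mp h3)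

/-- `[B_δ, B₀] = c[2]_q (B_{δ+α₀} − B₁)` where `B_{δ+α₀} = T₀(B₁)`. -/
theorem stmt6 (c : KK) (hc : c ≠ 0) (T0 : QOns c ≃ₐ[KK] QOns c)
    (hT00 : T0 (Bo c) = Bo c) (hT01 : T0 (Bi c) = T0B1val c) :
    Bdel c * Bo c - Bo c * Bdel c = (c * (qq + qq⁻¹)) • (T0 (Bi c) - Bi c) := by
  rw [hT01]
  have hq : qq ≠ 0 := qq_ne_zero
  have hq2 : qq + qq⁻¹ ≠ 0 := qq_add_inv_ne_zero
  unfold Bdel T0B1val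
  rw [add_sub_cancel_right, smul_smul]
  have hd : qq * qq + 1 ≠ 0 := by
    have := mul_ne_zero hq hq2
    rwa [mul_add, mul_inv_cancel₀ hq] at this
  have h1 : c * (qq + qq⁻¹) * (qq ^ 2 * (qq + qq⁻¹) * c)⁻¹ = (qq⁻¹) ^ 2 := by
    field_simp
    exact div_self (by rw [← sq] at hd; exact hd)
  rw [h1, smul_add, smul_sub, smul_smul, smul_smul]
  have h2 : (qq⁻¹) ^ 2 * (qq * (qq + qq⁻¹)) = 1 + (qq⁻¹) ^ 2 := by
    field_simp
  have h3 : (qq⁻¹) ^ 2 * qq ^ 2 = 1 := by field_simp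
  rw [h2, h3, one_smul, add_smul, one_smul]
  have hneg : ∀ x y : QOns c, -x * y = -(x * y) := fun x y => neg_mul x y
  have hneg2 : ∀ x y : QOns c, x * -y = -(x * y) := fun x y => mul_neg x y
  simp only [sub_mul, mul_sub, add_mul, mul_add, hneg, hneg2, smul_mul_assoc,
    mul_smul_comm, mul_assoc, sq, smul_sub, smul_add]
  abel

end
end

section
/- Let B_{nδ+α_1} = (T_1^{-1}Φ)^n(B_1) for n ≥ 0 in the q-Onsager algebra and B_δ = −B_0B_1 + q^{-2}B_1B_0. Then for all n ≥ 1, [B_{nδ+α_1}, B_δ] = c[2]_q (B_{(n+1)δ+α_1} − B_{(n−1)δ+α_1}). -/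
set_option synthInstance.maxHeartbeats 1000000
set_option maxHeartbeats 1000000

noncomputable section

open scoped BigOperators

/-! ### Auxiliary lemmas -/

lemma genA {k A : Type} [Field k] [Ring A] [Algebra k A] (q c' : k)
    (hq : q ≠ 0) (W X Y : A)
    (hW : (q ^ 2 * (q + q⁻¹) * c') • W =
      (X * Y ^ 2 - (q * (q + q⁻¹)) • (Y * X * Y) + q ^ 2 • (Y ^ 2 * X))
        + (q ^ 2 * (q + q⁻¹) * c') • X)
    (hrel : Y ^ 3 * X - (q ^ 2 + 1 + (q⁻¹) ^ 2) • (Y ^ 2 * X * Y)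
        + (q ^ 2 + 1 + (q⁻¹) ^ 2) • (Y * X * Y ^ 2) - X * Y ^ 3
      = -((q * c' * (q + q⁻¹) ^ 2) • (Y * X - X * Y))) :
    (q ^ 2 * (q + q⁻¹) * c') • (-(W * Y) + ((q⁻¹) ^ 2) • (Y * W))
      = (q ^ 2 * (q + q⁻¹) * c') • (-(Y * X) + ((q⁻¹) ^ 2) • (X * Y)) := by
  have h1 : (q ^ 2 * (q + q⁻¹) * c') • (W * Y) =
      ((X * Y ^ 2 - (q * (q + q⁻¹)) • (Y * X * Y) + q ^ 2 • (Y ^ 2 * X))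
        + (q ^ 2 * (q + q⁻¹) * c') • X) * Y := by
    rw [← smul_mul_assoc, hW]
  have h2 : (q ^ 2 * (q + q⁻¹) * c') • (Y * W) =
      Y * ((X * Y ^ 2 - (q * (q + q⁻¹)) • (Y * X * Y) + q ^ 2 • (Y ^ 2 * X))
        + (q ^ 2 * (q + q⁻¹) * c') • X) := by
    rw [← mul_smul_comm, hW]
  rw [smul_add, smul_neg, smul_comm ((q : k) ^ 2 * (q + q⁻¹) * c') (((q⁻¹ : k)) ^ 2), h1, h2]
  rw [show (q ^ 2 * (q + q⁻¹) * c') • (-(Y * X) + ((q⁻¹) ^ 2) • (X * Y))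
      = (q ^ 2 * (q + q⁻¹) * c') • (-(Y * X) + ((q⁻¹) ^ 2) • (X * Y))
        + ((Y ^ 3 * X - (q ^ 2 + 1 + (q⁻¹) ^ 2) • (Y ^ 2 * X * Y)
          + (q ^ 2 + 1 + (q⁻¹) ^ 2) • (Y * X * Y ^ 2) - X * Y ^ 3)
         - (-((q * c' * (q + q⁻¹) ^ 2) • (Y * X - X * Y)))) from by
    rw [sub_eq_zero.mpr hrel, add_zero]]
  simp only [mul_add, add_mul, mul_sub, sub_mul, smul_mul_assoc, mul_smul_comm,
    smul_add, smul_sub, smul_smul, neg_mul, mul_neg, smul_neg, neg_neg, mul_assoc,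
    pow_succ, pow_zero, one_mul]
  match_scalars
  all_goals try (field_simp; try ring)
  all_goals try ring
  all_goals try (ring_nf; field_simp; try ring)
  all_goals try ring

lemma genU {k A : Type} [Field k] [Ring A] [Algebra k A] (q c' : k)
    (hq : q ≠ 0) (W X Y : A)
    (hW : (q ^ 2 * (q + q⁻¹) * c') • W =
      (X * Y ^ 2 - (q * (q + q⁻¹)) • (Y * X * Y) + q ^ 2 • (Y ^ 2 * X))
        + (q ^ 2 * (q + q⁻¹) * c') • X) :
    (q ^ 2 * (q + q⁻¹) * c') • W
      + q ^ 2 • (Y * (-(Y * X) + ((q⁻¹) ^ 2) • (X * Y))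
          - (-(Y * X) + ((q⁻¹) ^ 2) • (X * Y)) * Y)
    = (q ^ 2 * (q + q⁻¹) * c') • X := by
  rw [hW]
  simp only [mul_add, add_mul, mul_sub, sub_mul, smul_mul_assoc, mul_smul_comm,
    smul_add, smul_sub, smul_smul, neg_mul, mul_neg, smul_neg, neg_neg, mul_assoc,
    pow_succ, pow_zero, one_mul]
  match_scalars
  all_goals try (field_simp; try ring)
  all_goals try ring
  all_goals try (ring_nf; field_simp; try ring)
  all_goals try ring

lemma hq_ne : (qq : KK) ≠ 0 := RatFunc.X_ne_zero

lemma hq2_ne : (qq ^ 2 + 1 : KK) ≠ 0 := by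
  have hpoly : (Polynomial.X ^ 2 + 1 : Polynomial ℚ) ≠ 0 := by
    intro h
    have := congrArg (fun p => Polynomial.coeff p 0) h
    simp at this
  have heq : (qq ^ 2 + 1 : KK) = algebraMap (Polynomial ℚ) KK (Polynomial.X ^ 2 + 1) := by
    simp [qq, RatFunc.algebraMap_X]
  rw [heq]
  intro h
  exact hpoly (IsFractionRing.injective (Polynomial ℚ) KK (by simpa using h))

lemma h2_ne : (qq + qq⁻¹ : KK) ≠ 0 := by
  intro h
  apply hq2_ne
  have := congrArg (fun x => qq * x) h
  simpa [mul_add, mul_inv_cancel₀ hq_ne, sq] using this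

lemma ha_ne {c : KK} (hc : c ≠ 0) : (qq ^ 2 * (qq + qq⁻¹) * c : KK) ≠ 0 :=
  mul_ne_zero (mul_ne_zero (pow_ne_zero _ hq_ne) h2_ne) hc

lemma hb_ne {c : KK} (hc : c ≠ 0) : (c * (qq + qq⁻¹) : KK) ≠ 0 :=
  mul_ne_zero hc h2_ne

lemma smul_cancel {c : KK} {a : KK} (ha : a ≠ 0) {x y : QOns c} (h : a • x = a • y) :
    x = y := by
  have h2 := congrArg (fun z => a⁻¹ • z) h
  simpa [smul_smul, inv_mul_cancel₀ ha] using h2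

lemma hrel1' (c : KK) :
    Bi c ^ 3 * Bo c - (qq ^ 2 + 1 + (qq⁻¹) ^ 2) • (Bi c ^ 2 * Bo c * Bi c)
      + (qq ^ 2 + 1 + (qq⁻¹) ^ 2) • (Bi c * Bo c * Bi c ^ 2) - Bo c * Bi c ^ 3
    = -((qq * c * (qq + qq⁻¹) ^ 2) • (Bi c * Bo c - Bo c * Bi c)) := by
  have h := RingQuot.mkAlgHom_rel KK (qOnsRel.r1 (c := c))
  simpa [Bo, Bi, map_sub, map_add, map_smul, map_mul, map_pow, neg_smul] using h

section Main

variable (c : KK) (Φ T0 : QOns c ≃ₐ[KK] QOns c)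

/-- `W`, the image `T₁(B₀)`. -/
def Wv : QOns c :=
  (qq ^ 2 * (qq + qq⁻¹) * c)⁻¹ •
    (Bo c * Bi c ^ 2 - (qq * (qq + qq⁻¹)) • (Bi c * Bo c * Bi c) + qq ^ 2 • (Bi c ^ 2 * Bo c))
    + Bo c

lemma hWv (hc : c ≠ 0) : (qq ^ 2 * (qq + qq⁻¹) * c) • Wv c =
    (Bo c * Bi c ^ 2 - (qq * (qq + qq⁻¹)) • (Bi c * Bo c * Bi c) + qq ^ 2 • (Bi c ^ 2 * Bo c))
      + (qq ^ 2 * (qq + qq⁻¹) * c) • Bo c := by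
  rw [Wv, smul_add, smul_smul, mul_inv_cancel₀ (ha_ne hc), one_smul]

lemma T1_Bo (hΦ0 : Φ (Bo c) = Bi c) (hΦ1 : Φ (Bi c) = Bo c)
    (hT01 : T0 (Bi c) = T0B1val c) :
    (T1def c Φ T0) (Bo c) = Wv c := by
  simp [T1def, AlgEquiv.trans_apply, hΦ0, hT01, T0B1val, Wv, map_add, map_smul, map_sub,
    map_mul, map_pow, hΦ1]

lemma T1_Bi (hΦ0 : Φ (Bo c) = Bi c) (hΦ1 : Φ (Bi c) = Bo c)
    (hT00 : T0 (Bo c) = Bo c) :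
    (T1def c Φ T0) (Bi c) = Bi c := by
  simp [T1def, AlgEquiv.trans_apply, hΦ1, hT00, hΦ0]

lemma T1_Bdel (hc : c ≠ 0) (hΦ0 : Φ (Bo c) = Bi c) (hΦ1 : Φ (Bi c) = Bo c)
    (hT00 : T0 (Bo c) = Bo c) (hT01 : T0 (Bi c) = T0B1val c) :
    (T1def c Φ T0) (Bdel c) = tBdel c := by
  have key := genA (A := QOns c) qq c hq_ne (Wv c) (Bo c) (Bi c) (hWv c hc) (hrel1' c)
  have : (T1def c Φ T0) (Bdel c) =
      -(Wv c * Bi c) + ((qq⁻¹) ^ 2) • (Bi c * Wv c) := by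
    rw [Bdel, map_add, map_neg, map_mul, map_smul, map_mul,
      T1_Bo c Φ T0 hΦ0 hΦ1 hT01, T1_Bi c Φ T0 hΦ0 hΦ1 hT00]
  rw [this, tBdel]
  exact smul_cancel (ha_ne hc) key

/-- `U = T₁⁻¹(B₀)`. -/
def Uv : QOns c :=
  Bo c + (c * (qq + qq⁻¹))⁻¹ • (Bi c * Bdel c - Bdel c * Bi c)

lemma T1_Uv (hc : c ≠ 0) (hΦ0 : Φ (Bo c) = Bi c) (hΦ1 : Φ (Bi c) = Bo c)
    (hT00 : T0 (Bo c) = Bo c) (hT01 : T0 (Bi c) = T0B1val c) :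
    (T1def c Φ T0) (Uv c) = Bo c := by
  have key := genU (A := QOns c) qq c hq_ne (Wv c) (Bo c) (Bi c) (hWv c hc)
  have hTU : (T1def c Φ T0) (Uv c) =
      Wv c + (c * (qq + qq⁻¹))⁻¹ • (Bi c * tBdel c - tBdel c * Bi c) := by
    rw [Uv, map_add, map_smul, map_sub, map_mul, map_mul,
      T1_Bo c Φ T0 hΦ0 hΦ1 hT01, T1_Bi c Φ T0 hΦ0 hΦ1 hT00,
      T1_Bdel c Φ T0 hc hΦ0 hΦ1 hT00 hT01]
  rw [hTU]
  apply smul_cancel (ha_ne hc)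
  rw [smul_add, smul_smul,
    show (qq ^ 2 * (qq + qq⁻¹) * c) * (c * (qq + qq⁻¹))⁻¹ = qq ^ 2 from by
      rw [show (qq ^ 2 * (qq + qq⁻¹) * c : KK) = qq ^ 2 * (c * (qq + qq⁻¹)) from by ring,
        mul_assoc, mul_inv_cancel₀ (hb_ne hc), mul_one]]
  rw [tBdel] at *
  exact key

end Main

section Psi

variable (c : KK) (Φ T0 : QOns c ≃ₐ[KK] QOns c)

/-- `ψ = T₁⁻¹ ∘ Φ`. -/
def psi : QOns c ≃ₐ[KK] QOns c := Φ.trans (T1def c Φ T0).symm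

lemma Ba1_eq (n : ℕ) : Ba1 c Φ T0 n = (⇑(psi c Φ T0))^[n] (Bi c) := rfl

variable {c Φ T0}
variable (hc : c ≠ 0) (hΦ0 : Φ (Bo c) = Bi c) (hΦ1 : Φ (Bi c) = Bo c)
  (hT00 : T0 (Bo c) = Bo c) (hT01 : T0 (Bi c) = T0B1val c)

include hc hΦ0 hΦ1 hT00 hT01

lemma psi_Bdel : (psi c Φ T0) (Bdel c) = Bdel c := by
  have hPhiBdel : Φ (Bdel c) = tBdel c := by
    simp [Bdel, tBdel, map_add, map_neg, map_mul, map_smul, hΦ0, hΦ1]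
  have h := T1_Bdel c Φ T0 hc hΦ0 hΦ1 hT00 hT01
  rw [psi, AlgEquiv.trans_apply, hPhiBdel]
  exact ((T1def c Φ T0).symm_apply_eq).mpr h.symm

lemma psi_Bo : (psi c Φ T0) (Bo c) = Bi c := by
  have h := T1_Bi c Φ T0 hΦ0 hΦ1 hT00
  rw [psi, AlgEquiv.trans_apply, hΦ0]
  exact ((T1def c Φ T0).symm_apply_eq).mpr h.symm

lemma psi_Bi : (psi c Φ T0) (Bi c) = Uv c := by
  have h := T1_Uv c Φ T0 hc hΦ0 hΦ1 hT00 hT01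
  rw [psi, AlgEquiv.trans_apply, hΦ1]
  exact ((T1def c Φ T0).symm_apply_eq).mpr h.symm

lemma base_comm : Bi c * Bdel c - Bdel c * Bi c =
    (c * (qq + qq⁻¹)) • ((psi c Φ T0) (Bi c) - Bo c) := by
  rw [psi_Bi hc hΦ0 hΦ1 hT00 hT01, Uv, add_sub_cancel_left, smul_smul,
    mul_inv_cancel₀ (hb_ne hc), one_smul]

lemma gen_comm (n : ℕ) :
    (⇑(psi c Φ T0))^[n] (Bi c) * Bdel c - Bdel c * (⇑(psi c Φ T0))^[n] (Bi c) =
      (c * (qq + qq⁻¹)) • ((⇑(psi c Φ T0))^[n + 1] (Bi c) - (⇑(psi c Φ T0))^[n] (Bo c)) := by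
  induction n with
  | zero =>
    simpa [Function.iterate_one] using base_comm hc hΦ0 hΦ1 hT00 hT01
  | succ m ih =>
    have h := congrArg (⇑(psi c Φ T0)) ih
    rw [map_sub, map_mul, map_mul, map_smul, map_sub, psi_Bdel hc hΦ0 hΦ1 hT00 hT01] at h
    rw [Function.iterate_succ_apply' (⇑(psi c Φ T0)) m (Bi c),
      Function.iterate_succ_apply' (⇑(psi c Φ T0)) (m + 1) (Bi c),
      Function.iterate_succ_apply' (⇑(psi c Φ T0)) m (Bo c)]
    exact h

end Psi
/-- `[B_{nδ+α₁}, B_δ] = c[2]_q (B_{(n+1)δ+α₁} − B_{(n−1)δ+α₁})` for all `n ≥ 1`. -/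
theorem stmt8 (c : KK) (hc : c ≠ 0) (Φ T0 : QOns c ≃ₐ[KK] QOns c)
    (hΦ0 : Φ (Bo c) = Bi c) (hΦ1 : Φ (Bi c) = Bo c)
    (hT00 : T0 (Bo c) = Bo c) (hT01 : T0 (Bi c) = T0B1val c) :
    ∀ n : ℕ, 1 ≤ n →
      Ba1 c Φ T0 (n) * Bdel c - Bdel c * Ba1 c Φ T0 (n) =
        (c * (qq + qq⁻¹)) • (Ba1 c Φ T0 (n + 1) - Ba1 c Φ T0 (n - 1)) := by
  intro n hn
  obtain ⟨m, rfl⟩ : ∃ m, n = m + 1 := ⟨n - 1, (Nat.succ_pred_eq_of_pos hn).symm⟩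
  have h := gen_comm hc hΦ0 hΦ1 hT00 hT01 (m + 1)
  rw [Ba1_eq c Φ T0, Ba1_eq c Φ T0, Ba1_eq c Φ T0]
  simp only [Nat.add_sub_cancel]
  rw [h, Function.iterate_succ_apply (⇑(psi c Φ T0)) m (Bo c),
    psi_Bo hc hΦ0 hΦ1 hT00 hT01]

end
end

section
/- Define R_n = q²Σ_{m=0}^{n−3} T_0Φ(C_{n−m−1})B_{mδ+α_1} − q^{-2}Σ_{m=0}^{n−3} B_{mδ+α_1}T_0Φ(C_{n−m−1}) in the q-Onsager algebra. Then for all n ∈ ℕ (with the hypotheses T_0Φ(B_{kδ}) = B_{kδ} for k ≤ n−1), one has R_n = −Σ_{m=0}^{n−3}(B_{(n−m−2)δ}B_{(m−1)δ+α_1} + q²B_{(m−1)δ+α_1}B_{(n−m−2)δ}), with the convention B_{kδ+α_1} = B_{(−k−1)δ+α_0} for k < 0. -/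
set_option synthInstance.maxHeartbeats 1000000
set_option maxHeartbeats 1000000

noncomputable section

open scoped BigOperators

/-- `R_n = q²Σ_{m=0}^{n−3} T₀Φ(C_{n−m−1})B_{mδ+α₁} − q⁻²Σ_{m=0}^{n−3} B_{mδ+α₁}T₀Φ(C_{n−m−1})`. -/
def Rn (c : KK) (Φ T0 : QOns c ≃ₐ[KK] QOns c) (n : ℕ) : QOns c :=
  qq ^ 2 • (∑ m ∈ Finset.range (n - 2), T0 (Φ (CC c Φ T0 (n - m - 1))) * Ba1 c Φ T0 (m))
    - ((qq⁻¹) ^ 2) • (∑ m ∈ Finset.range (n - 2), Ba1 c Φ T0 (m) * T0 (Φ (CC c Φ T0 (n - m - 1))))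

section Lemmas

variable (c : KK) (Φ T0 : QOns c ≃ₐ[KK] QOns c)

lemma Ba1Z_coe (p : ℕ) : Ba1Z c Φ T0 (p : ℤ) = Ba1 c Φ T0 p := by
  simp [Ba1Z]

lemma Ba1Z_neg_one : Ba1Z c Φ T0 (-1) = Bo c := by
  norm_num [Ba1Z, Ba0]

lemma shift (hΦ1 : Φ (Bi c) = Bo c) (hT00 : T0 (Bo c) = Bo c) (p : ℕ) :
    T0 (Φ (Ba1 c Φ T0 p)) = Ba1Z c Φ T0 ((p : ℤ) - 1) := by
  cases p with
  | zero =>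
    have h0 : ((0 : ℕ) : ℤ) - 1 = -1 := by norm_num
    rw [h0, Ba1Z_neg_one]
    simp only [Ba1, Function.iterate_zero, id_eq]
    rw [hΦ1, hT00]
  | succ p =>
    have h0 : ((p + 1 : ℕ) : ℤ) - 1 = (p : ℤ) := by push_cast; ring
    rw [h0, Ba1Z_coe]
    have h1 : Ba1 c Φ T0 (p + 1) = (T1def c Φ T0).symm (Φ (Ba1 c Φ T0 p)) := by
      simp only [Ba1, Function.iterate_succ_apply', Function.comp_apply]
    rw [h1]
    have h2 : (T1def c Φ T0).symm (Φ (Ba1 c Φ T0 p))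
        = Φ.symm (T0.symm (Φ.symm (Φ (Ba1 c Φ T0 p)))) := rfl
    rw [h2, Φ.symm_apply_apply, Φ.apply_symm_apply, T0.apply_symm_apply]

/-- `E_K = Σ_{x+y=K−2, x,y ≥ −1} B_x B_y` (indices in the `Ba1Z` convention). -/
def ee (K : ℕ) : QOns c :=
  ∑ i ∈ Finset.range (K + 1), Ba1Z c Φ T0 ((i : ℤ) - 1) * Ba1Z c Φ T0 ((K : ℤ) - 1 - (i : ℤ))

lemma ee_zero : ee c Φ T0 0 = Bo c * Bo c := by
  norm_num [ee, Ba1Z_neg_one]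

lemma TPhiCC (hΦ1 : Φ (Bi c) = Bo c) (hT00 : T0 (Bo c) = Bo c) (k : ℕ) (hk : 2 ≤ k) :
    T0 (Φ (CC c Φ T0 k)) = ee c Φ T0 (k - 2) := by
  rw [CC, map_sum, map_sum, ee]
  rw [show k - 1 = (k - 2) + 1 from by omega]
  refine Finset.sum_congr rfl fun p hp => ?_
  rw [Finset.mem_range] at hp
  rw [map_mul, map_mul, shift c Φ T0 hΦ1 hT00, shift c Φ T0 hΦ1 hT00]
  congr 2
  omega

end Lemmas
section Lemmas2

variable (c : KK) (Φ T0 : QOns c ≃ₐ[KK] QOns c)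

/-- `F = Σ` over all words `B_xB_yB_z`, `x+y+z = n−5`, `x,y,z ≥ −1`, grouped by `z`. -/
def ff (n : ℕ) : QOns c :=
  ∑ j ∈ Finset.range (n - 1), ee c Φ T0 (n - 2 - j) * Ba1Z c Φ T0 ((j : ℤ) - 1)

/-- `M = Σ` over all words `B_x B₋₁ B_z`, `x+z = n−4`, `x,z ≥ −1`. -/
def mm (n : ℕ) : QOns c :=
  ∑ i ∈ Finset.range (n - 1),
    Ba1Z c Φ T0 ((i : ℤ) - 1) * (Bo c * Ba1Z c Φ T0 ((n : ℤ) - 3 - (i : ℤ)))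

lemma ff_swap (n : ℕ) :
    ff c Φ T0 n = ∑ j ∈ Finset.range (n - 1), Ba1Z c Φ T0 ((j : ℤ) - 1) * ee c Φ T0 (n - 2 - j) := by
  rw [ff]
  simp only [ee, Finset.sum_mul, Finset.mul_sum]
  rw [Finset.sum_sigma', Finset.sum_sigma']
  refine Finset.sum_nbij' (fun x => ⟨x.2, n - 2 - x.1 - x.2⟩) (fun x => ⟨n - 2 - x.1 - x.2, x.1⟩)
    ?_ ?_ ?_ ?_ ?_
  · rintro ⟨j, i⟩ h
    simp only [Finset.mem_sigma, Finset.mem_range] at h ⊢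
    omega
  · rintro ⟨j, i⟩ h
    simp only [Finset.mem_sigma, Finset.mem_range] at h ⊢
    omega
  · rintro ⟨j, i⟩ h
    simp only [Finset.mem_sigma, Finset.mem_range] at h
    obtain ⟨h1, h2⟩ := h
    simp only [Sigma.mk.inj_iff, heq_eq_eq, and_true, true_and]
    omega
  · rintro ⟨j, i⟩ h
    simp only [Finset.mem_sigma, Finset.mem_range] at h
    obtain ⟨h1, h2⟩ := h
    simp only [Sigma.mk.inj_iff, heq_eq_eq, and_true, true_and]
    omega
  · rintro ⟨j, i⟩ h
    simp only [Finset.mem_sigma, Finset.mem_range] at h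
    obtain ⟨h1, h2⟩ := h
    dsimp only
    rw [mul_assoc]
    have e1 : ((n - 2 - j : ℕ) : ℤ) - 1 - (i : ℤ) = ((n - 2 - j - i : ℕ) : ℤ) - 1 := by omega
    have e2 : ((j : ℤ)) - 1 = ((n - 2 - i : ℕ) : ℤ) - 1 - ((n - 2 - j - i : ℕ) : ℤ) := by omega
    rw [e1, e2]

end Lemmas2
section Lemmas3

variable (c : KK) (Φ T0 : QOns c ≃ₐ[KK] QOns c)

lemma A1 (n : ℕ) (hn : 3 ≤ n) :
    ∑ m ∈ Finset.range (n - 2), ee c Φ T0 (n - m - 3) * Ba1 c Φ T0 m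
      = ff c Φ T0 n - ee c Φ T0 (n - 2) * Bo c := by
  rw [eq_sub_iff_add_eq, ff, show n - 1 = (n - 2) + 1 from by omega, Finset.sum_range_succ']
  refine congrArg₂ (· + ·) ?_ ?_
  · refine Finset.sum_congr rfl fun m hm => ?_
    rw [Finset.mem_range] at hm
    rw [show n - 2 - (m + 1) = n - m - 3 from by omega,
      show ((m + 1 : ℕ) : ℤ) - 1 = ((m : ℕ) : ℤ) from by omega, Ba1Z_coe]
  · rw [show n - 2 - 0 = n - 2 from by omega,
      show ((0 : ℕ) : ℤ) - 1 = (-1 : ℤ) from by omega, Ba1Z_neg_one]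

lemma A2 (n : ℕ) (hn : 3 ≤ n) :
    ∑ m ∈ Finset.range (n - 2), Ba1 c Φ T0 m * ee c Φ T0 (n - m - 3)
      = ff c Φ T0 n - Bo c * ee c Φ T0 (n - 2) := by
  rw [eq_sub_iff_add_eq, ff_swap, show n - 1 = (n - 2) + 1 from by omega,
    Finset.sum_range_succ']
  refine congrArg₂ (· + ·) ?_ ?_
  · refine Finset.sum_congr rfl fun m hm => ?_
    rw [Finset.mem_range] at hm
    rw [show n - 2 - (m + 1) = n - m - 3 from by omega,
      show ((m + 1 : ℕ) : ℤ) - 1 = ((m : ℕ) : ℤ) from by omega, Ba1Z_coe]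
  · rw [show n - 2 - 0 = n - 2 from by omega,
      show ((0 : ℕ) : ℤ) - 1 = (-1 : ℤ) from by omega, Ba1Z_neg_one]

lemma A3 (n : ℕ) (hn : 3 ≤ n) :
    ∑ m ∈ Finset.range (n - 2), ee c Φ T0 (n - m - 2) * Ba1Z c Φ T0 ((m : ℤ) - 1)
      = ff c Φ T0 n - Bo c * Bo c * Ba1Z c Φ T0 ((n : ℤ) - 3) := by
  rw [eq_sub_iff_add_eq, ff, show n - 1 = (n - 2) + 1 from by omega, Finset.sum_range_succ]
  refine congrArg₂ (· + ·) ?_ ?_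
  · refine Finset.sum_congr rfl fun m hm => ?_
    rw [show n - 2 - m = n - m - 2 from by omega]
  · rw [show n - 2 - (n - 2) = 0 from by omega, ee_zero,
      show ((n - 2 : ℕ) : ℤ) - 1 = ((n : ℤ) - 3) from by omega]

lemma A4 (n : ℕ) (hn : 3 ≤ n) :
    ∑ m ∈ Finset.range (n - 2), Ba1Z c Φ T0 ((m : ℤ) - 1) * ee c Φ T0 (n - m - 2)
      = ff c Φ T0 n - Ba1Z c Φ T0 ((n : ℤ) - 3) * (Bo c * Bo c) := by
  rw [eq_sub_iff_add_eq, ff_swap, show n - 1 = (n - 2) + 1 from by omega,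
    Finset.sum_range_succ]
  refine congrArg₂ (· + ·) ?_ ?_
  · refine Finset.sum_congr rfl fun m hm => ?_
    rw [show n - 2 - m = n - m - 2 from by omega]
  · rw [show n - 2 - (n - 2) = 0 from by omega, ee_zero,
      show ((n - 2 : ℕ) : ℤ) - 1 = ((n : ℤ) - 3) from by omega]

end Lemmas3
section Lemmas3b

variable (c : KK) (Φ T0 : QOns c ≃ₐ[KK] QOns c)

lemma A5 (n : ℕ) (hn : 3 ≤ n) :
    ∑ m ∈ Finset.range (n - 2), Ba1Z c Φ T0 ((n : ℤ) - m - 3) * Ba1Z c Φ T0 ((m : ℤ) - 1)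
      = ee c Φ T0 (n - 2) - Bo c * Ba1Z c Φ T0 ((n : ℤ) - 3) := by
  rw [eq_sub_iff_add_eq, ee, Finset.sum_range_succ']
  refine congrArg₂ (· + ·) ?_ ?_
  · refine (Finset.sum_congr rfl fun m hm => ?_).trans
      (Finset.sum_range_reflect (fun i => Ba1Z c Φ T0 (((i + 1 : ℕ) : ℤ) - 1)
        * Ba1Z c Φ T0 (((n - 2 : ℕ) : ℤ) - 1 - ((i + 1 : ℕ) : ℤ))) (n - 2))
    rw [Finset.mem_range] at hm
    rw [show ((n : ℤ)) - m - 3 = ((n - 2 - 1 - m + 1 : ℕ) : ℤ) - 1 from by omega,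
      show ((m : ℤ)) - 1 = ((n - 2 : ℕ) : ℤ) - 1 - ((n - 2 - 1 - m + 1 : ℕ) : ℤ) from by omega]
  · rw [show ((0 : ℕ) : ℤ) - 1 = (-1 : ℤ) from by omega, Ba1Z_neg_one,
      show ((n - 2 : ℕ) : ℤ) - 1 - ((0 : ℕ) : ℤ) = (n : ℤ) - 3 from by omega]

lemma A6 (n : ℕ) (hn : 3 ≤ n) :
    ∑ m ∈ Finset.range (n - 2), Ba1Z c Φ T0 ((m : ℤ) - 1) * Ba1Z c Φ T0 ((n : ℤ) - m - 3)
      = ee c Φ T0 (n - 2) - Ba1Z c Φ T0 ((n : ℤ) - 3) * Bo c := by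
  rw [eq_sub_iff_add_eq, ee, Finset.sum_range_succ]
  refine congrArg₂ (· + ·) ?_ ?_
  · refine Finset.sum_congr rfl fun m hm => ?_
    rw [Finset.mem_range] at hm
    rw [show ((n - 2 : ℕ) : ℤ) - 1 - (m : ℤ) = (n : ℤ) - m - 3 from by omega]
  · rw [show ((n - 2 : ℕ) : ℤ) - 1 = (n : ℤ) - 3 from by omega,
      show ((n : ℤ)) - 3 - ((n - 2 : ℕ) : ℤ) = (-1 : ℤ) from by omega, Ba1Z_neg_one]

lemma A7 (n : ℕ) (hn : 3 ≤ n) :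
    ∑ m ∈ Finset.range (n - 2),
        Ba1Z c Φ T0 ((n : ℤ) - m - 3) * (Bo c * Ba1Z c Φ T0 ((m : ℤ) - 1))
      = mm c Φ T0 n - Bo c * (Bo c * Ba1Z c Φ T0 ((n : ℤ) - 3)) := by
  rw [eq_sub_iff_add_eq, mm, show n - 1 = (n - 2) + 1 from by omega, Finset.sum_range_succ']
  refine congrArg₂ (· + ·) ?_ ?_
  · refine (Finset.sum_congr rfl fun m hm => ?_).trans
      (Finset.sum_range_reflect (fun i => Ba1Z c Φ T0 (((i + 1 : ℕ) : ℤ) - 1)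
        * (Bo c * Ba1Z c Φ T0 ((n : ℤ) - 3 - ((i + 1 : ℕ) : ℤ)))) (n - 2))
    rw [Finset.mem_range] at hm
    rw [show ((n : ℤ)) - m - 3 = ((n - 2 - 1 - m + 1 : ℕ) : ℤ) - 1 from by omega,
      show ((m : ℤ)) - 1 = (n : ℤ) - 3 - ((n - 2 - 1 - m + 1 : ℕ) : ℤ) from by omega]
  · rw [show ((0 : ℕ) : ℤ) - 1 = (-1 : ℤ) from by omega, Ba1Z_neg_one,
      show ((n : ℤ)) - 3 - ((0 : ℕ) : ℤ) = (n : ℤ) - 3 from by omega]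

lemma A8 (n : ℕ) (hn : 3 ≤ n) :
    ∑ m ∈ Finset.range (n - 2),
        Ba1Z c Φ T0 ((m : ℤ) - 1) * (Bo c * Ba1Z c Φ T0 ((n : ℤ) - m - 3))
      = mm c Φ T0 n - Ba1Z c Φ T0 ((n : ℤ) - 3) * (Bo c * Bo c) := by
  rw [eq_sub_iff_add_eq, mm, show n - 1 = (n - 2) + 1 from by omega, Finset.sum_range_succ]
  refine congrArg₂ (· + ·) ?_ ?_
  · refine Finset.sum_congr rfl fun m hm => ?_
    rw [Finset.mem_range] at hm
    rw [show ((n : ℤ)) - 3 - (m : ℤ) = (n : ℤ) - m - 3 from by omega]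
  · rw [show ((n - 2 : ℕ) : ℤ) - 1 = (n : ℤ) - 3 from by omega,
      show ((n : ℤ)) - 3 - ((n - 2 : ℕ) : ℤ) = (-1 : ℤ) from by omega, Ba1Z_neg_one]

end Lemmas3b
section Lemmas4

lemma gBim {R M : Type} [CommRing R] [AddCommGroup M] [Module R M] (s : R) (X Y E C : M)
    (hC : C = E - X - Y) : -X + s • Y + (s - 1) • C = (-s) • X + Y + (s - 1) • E := by
  subst hC; module

lemma gMain {R M : Type} [CommRing R] [Ring M] [Algebra R M] (t s : R) (hst : t * s = 1)
    (B Y Z E : M) :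
    ((-s) • (B * Y) + Y * B + (s - 1) • E) * Z
      + t • (Z * ((-s) • (B * Y) + Y * B + (s - 1) • E))
    = (-s) • (B * (Y * Z)) + Y * (B * Z) + (s - 1) • (E * Z)
      + ((-1 : R) • (Z * (B * Y)) + t • (Z * (Y * B)) + (1 - t) • (Z * E)) := by
  simp only [add_mul, smul_mul_assoc, mul_add, mul_smul_comm, smul_smul, mul_assoc]
  match_scalars <;> first
    | ring1
    | linear_combination hst
    | linear_combination (-1 : R) * hst

lemma gFinal {R M : Type} [CommRing R] [Ring M] [Algebra R M] (t s : R)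
    (F Mm u B V : M) :
    t • (F - u * B) - s • (F - B * u)
      = -((-s) • (B * (u - B * V)) + (Mm - B * (B * V)) + (s - 1) • (F - B * B * V)
          + ((-1 : R) • (Mm - V * (B * B)) + t • ((u - V * B) * B)
            + (1 - t) • (F - V * (B * B)))) := by
  simp only [mul_sub, sub_mul, mul_assoc]
  module

variable (c : KK) (Φ T0 : QOns c ≃ₐ[KK] QOns c)

lemma ee_split (j : ℕ) (hj : 1 ≤ j) :
    ee c Φ T0 j = CC c Φ T0 j + Bo c * Ba1 c Φ T0 (j - 1) + Ba1 c Φ T0 (j - 1) * Bo c := by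
  rw [ee, show j + 1 = (j - 1) + 1 + 1 from by omega, Finset.sum_range_succ,
    Finset.sum_range_succ']
  refine congrArg₂ (· + ·) (congrArg₂ (· + ·) ?_ ?_) ?_
  · rw [CC]
    refine Finset.sum_congr rfl fun p hp => ?_
    rw [Finset.mem_range] at hp
    rw [show ((p + 1 : ℕ) : ℤ) - 1 = ((p : ℕ) : ℤ) from by omega, Ba1Z_coe,
      show ((j : ℕ) : ℤ) - 1 - ((p + 1 : ℕ) : ℤ) = ((j - 2 - p : ℕ) : ℤ) from by omega, Ba1Z_coe]
  · rw [show ((0 : ℕ) : ℤ) - 1 = (-1 : ℤ) from by omega, Ba1Z_neg_one,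
      show ((j : ℕ) : ℤ) - 1 - ((0 : ℕ) : ℤ) = ((j - 1 : ℕ) : ℤ) from by omega, Ba1Z_coe]
  · rw [show ((j - 1 + 1 : ℕ) : ℤ) - 1 = ((j - 1 : ℕ) : ℤ) from by omega, Ba1Z_coe,
      show ((j : ℕ) : ℤ) - 1 - ((j - 1 + 1 : ℕ) : ℤ) = (-1 : ℤ) from by omega, Ba1Z_neg_one]

lemma Bim_eq (j : ℕ) (hj : 1 ≤ j) :
    Bim c Φ T0 j = (-((qq⁻¹) ^ 2)) • (Bo c * Ba1 c Φ T0 (j - 1))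
      + Ba1 c Φ T0 (j - 1) * Bo c + (((qq⁻¹) ^ 2 - 1)) • ee c Φ T0 j := by
  have hCC : CC c Φ T0 j = ee c Φ T0 j - Bo c * Ba1 c Φ T0 (j - 1)
      - Ba1 c Φ T0 (j - 1) * Bo c := by
    rw [ee_split c Φ T0 j hj]; abel
  rw [Bim]
  exact gBim ((qq⁻¹) ^ 2) _ _ _ _ hCC

end Lemmas4
/-- `R_n = −Σ_{m=0}^{n−3}(B_{(n−m−2)δ}B_{(m−1)δ+α₁} + q²B_{(m−1)δ+α₁}B_{(n−m−2)δ})`,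
with the convention `B_{kδ+α₁} = B_{(−k−1)δ+α₀}` for `k < 0`. -/
theorem stmt15 (c : KK) (hc : c ≠ 0) (Φ T0 : QOns c ≃ₐ[KK] QOns c)
    (hΦ0 : Φ (Bo c) = Bi c) (hΦ1 : Φ (Bi c) = Bo c)
    (hT00 : T0 (Bo c) = Bo c) (hT01 : T0 (Bi c) = T0B1val c) :
    ∀ n : ℕ, 1 ≤ n →
      (∀ k, 1 ≤ k → k ≤ n - 1 → T0 (Φ (Bim c Φ T0 (k))) = Bim c Φ T0 (k)) →
      Rn c Φ T0 n =
        -∑ m ∈ Finset.range (n - 2),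
          (Bim c Φ T0 (n - m - 2) * Ba1Z c Φ T0 ((m : ℤ) - 1)
            + qq ^ 2 • (Ba1Z c Φ T0 ((m : ℤ) - 1) * Bim c Φ T0 (n - m - 2))) := by
  intro n hn _hfix
  by_cases hn3 : 3 ≤ n
  · have hq : (qq : KK) ≠ 0 := RatFunc.X_ne_zero
    have hst : qq ^ 2 * (qq⁻¹) ^ 2 = 1 := by
      rw [← mul_pow, mul_inv_cancel₀ hq, one_pow]
    have e1 : ∑ m ∈ Finset.range (n - 2), T0 (Φ (CC c Φ T0 (n - m - 1))) * Ba1 c Φ T0 m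
        = ff c Φ T0 n - ee c Φ T0 (n - 2) * Bo c := by
      rw [← A1 c Φ T0 n hn3]
      refine Finset.sum_congr rfl fun m hm => ?_
      rw [Finset.mem_range] at hm
      rw [TPhiCC c Φ T0 hΦ1 hT00 (n - m - 1) (by omega),
        show n - m - 1 - 2 = n - m - 3 from by omega]
    have e2 : ∑ m ∈ Finset.range (n - 2), Ba1 c Φ T0 m * T0 (Φ (CC c Φ T0 (n - m - 1)))
        = ff c Φ T0 n - Bo c * ee c Φ T0 (n - 2) := by
      rw [← A2 c Φ T0 n hn3]
      refine Finset.sum_congr rfl fun m hm => ?_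
      rw [Finset.mem_range] at hm
      rw [TPhiCC c Φ T0 hΦ1 hT00 (n - m - 1) (by omega),
        show n - m - 1 - 2 = n - m - 3 from by omega]
    have e3 : ∑ m ∈ Finset.range (n - 2),
          (Bim c Φ T0 (n - m - 2) * Ba1Z c Φ T0 ((m : ℤ) - 1)
            + qq ^ 2 • (Ba1Z c Φ T0 ((m : ℤ) - 1) * Bim c Φ T0 (n - m - 2)))
        = ∑ m ∈ Finset.range (n - 2),
          ((-((qq⁻¹) ^ 2)) • (Bo c * (Ba1Z c Φ T0 ((n : ℤ) - m - 3) * Ba1Z c Φ T0 ((m : ℤ) - 1)))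
            + Ba1Z c Φ T0 ((n : ℤ) - m - 3) * (Bo c * Ba1Z c Φ T0 ((m : ℤ) - 1))
            + ((qq⁻¹) ^ 2 - 1) • (ee c Φ T0 (n - m - 2) * Ba1Z c Φ T0 ((m : ℤ) - 1))
            + ((-1 : KK) • (Ba1Z c Φ T0 ((m : ℤ) - 1)
                  * (Bo c * Ba1Z c Φ T0 ((n : ℤ) - m - 3)))
              + qq ^ 2 • (Ba1Z c Φ T0 ((m : ℤ) - 1)
                  * (Ba1Z c Φ T0 ((n : ℤ) - m - 3) * Bo c))
              + (1 - qq ^ 2) • (Ba1Z c Φ T0 ((m : ℤ) - 1) * ee c Φ T0 (n - m - 2)))) := by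
      refine Finset.sum_congr rfl fun m hm => ?_
      rw [Finset.mem_range] at hm
      have hY : Ba1 c Φ T0 (n - m - 2 - 1) = Ba1Z c Φ T0 ((n : ℤ) - m - 3) := by
        rw [← Ba1Z_coe, show ((n - m - 2 - 1 : ℕ) : ℤ) = (n : ℤ) - m - 3 from by omega]
      rw [Bim_eq c Φ T0 (n - m - 2) (by omega), hY]
      exact gMain (qq ^ 2) ((qq⁻¹) ^ 2) hst (Bo c) _ _ _
    rw [Rn, e1, e2, e3]
    simp only [Finset.sum_add_distrib]
    rw [← Finset.smul_sum, ← Finset.smul_sum, ← Finset.smul_sum, ← Finset.smul_sum,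
      ← Finset.smul_sum]
    rw [← Finset.mul_sum, A5 c Φ T0 n hn3, A7 c Φ T0 n hn3, A3 c Φ T0 n hn3,
      A8 c Φ T0 n hn3, A4 c Φ T0 n hn3]
    rw [show (∑ m ∈ Finset.range (n - 2), Ba1Z c Φ T0 ((m : ℤ) - 1)
          * (Ba1Z c Φ T0 ((n : ℤ) - m - 3) * Bo c))
        = (ee c Φ T0 (n - 2) - Ba1Z c Φ T0 ((n : ℤ) - 3) * Bo c) * Bo c from by
      rw [← A6 c Φ T0 n hn3, Finset.sum_mul]
      exact Finset.sum_congr rfl fun m _ => (mul_assoc _ _ _).symm]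
    exact gFinal (qq ^ 2) ((qq⁻¹) ^ 2) (ff c Φ T0 n) (mm c Φ T0 n) (ee c Φ T0 (n - 2))
      (Bo c) (Ba1Z c Φ T0 ((n : ℤ) - 3))
  · rw [show n - 2 = 0 from by omega, Rn, show n - 2 = 0 from by omega]
    simp
end
end
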